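/- Back-and-forth lemma: let P, Q be regular ω-posets, (C_n) and (D_n) coinitial sequences of finite caps of P and Q respectively, and suppose given ∧-preserving co-surjective relations ⊐_n ⊆ D_n × C_n and ⊵_n ⊆ C_n × D_{n+1} such that ⊐_n ∘ ⊵_n ⊆ ≥_Q and ⊵_n ∘ ⊐_{n+1} ⊆ ≥_P for all n. Then the interleaved sequence ←_{2n} = ⊐_n, ←_{2n+1} = ⊴_n is a bi-thin arrow-sequence; in particular it defines a homeomorphism SP ≅ SQ. -/

import Mathlib

/-!
Each `⊐ₙ` and `⊵ₙ` is finite, both of its projections are refined by one of the given caps, and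
consecutive relations are linked by `≤`; this gives the arrow-sequence axioms. Regularity
lets every cap be star-refined by a level, and together with `∧`-preservation this sends the
`⌅`-neighbourhood of each element of a deep level of `P` star-below a single element of any cap
of `Q`, which is thinness. For a point `x` of `SP`, Kőnig's lemma gives a branch through the
finite relations `⊐ₙ` compatible with `x`, and a minimal selector wedging the decreasing
`Q`-coordinates of the branch is a point `y` of `SQ` related to `x`; thinness makes `y` unique
and continuous in `x`. After dropping `⊐₀` the hypotheses are symmetric in `P` and `Q`, so the
same argument yields the inverse map.
-/

namespace OP

section OmegaPoset

variable (P : Type*) [PartialOrder P]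

/-- The n-th cone of the poset: `cone 0` is the set of maximal elements. -/
def cone : ℕ → Set P
  | 0 => {p | ∀ q, ¬ p < q}
  | n + 1 => {p | ∀ q, p < q → q ∈ cone n}

/-- The n-th level: atoms (minimal elements) of the n-th cone. -/
def level (n : ℕ) : Set P := {p | p ∈ cone P n ∧ ∀ q, q < p → q ∉ cone P n}

/-- An ω-poset: all levels finite and every element in some cone. -/
def IsOmegaPoset : Prop := (∀ n, (level P n).Finite) ∧ ∀ p : P, ∃ n, p ∈ cone P n

variable {P}

/-- `refines A C` : every element of `A` lies below some element of `C` (`A ≤ C`). -/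
def refines (A C : Set P) : Prop := ∀ a ∈ A, ∃ c ∈ C, a ≤ c

/-- A cap is a subset refined by some level. -/
def IsCap (C : Set P) : Prop := ∃ n, refines (level P n) C

/-- A selector meets every cap. -/
def IsSelector (S : Set P) : Prop := ∀ C : Set P, IsCap C → (S ∩ C).Nonempty

/-- `wedge p q` : `p` and `q` have a common lower bound. -/
def wedge (p q : P) : Prop := ∃ r, r ≤ p ∧ r ≤ q

def wedgeSet (p : P) : Set P := {q | wedge p q}

/-- The adjacency relation `p ⌅ q`. -/
def barwedge (p q : P) : Prop := ∀ C : Set P, IsCap C → ∃ c ∈ C, wedge p c ∧ wedge c q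

/-- `p ⊲_C q`. -/
def starBelowOn (C : Set P) (p q : P) : Prop := ∀ c ∈ C, wedge p c → c ≤ q

/-- The star-below relation `p ⊲ q`. -/
def starBelow (p q : P) : Prop := ∃ n, starBelowOn (level P n) p q

/-- A clique: pairwise adjacent set. -/
def IsClique (X : Set P) : Prop := ∀ p ∈ X, ∀ q ∈ X, barwedge p q

/-- Unbounded subset: meets `C^≥` for every cap `C`. -/
def IsUnbounded (X : Set P) : Prop := ∀ C : Set P, IsCap C → ∃ u ∈ X, ∃ c ∈ C, u ≤ c

variable (P)

/-- Regularity: every level is eventually star-refined by a later level. -/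
def IsRegular : Prop :=
  ∀ m, ∃ n, m < n ∧ ∀ p ∈ level P n, ∃ q ∈ level P m, starBelow p q

/-- The spectrum: minimal selectors. -/
def Spec : Set (Set P) := {S | IsSelector S ∧ ∀ T ⊆ S, IsSelector T → T = S}

def SpecT : Type _ := {S : Set P // S ∈ Spec P}

instance : TopologicalSpace (SpecT P) :=
  TopologicalSpace.generateFrom {U | ∃ p : P, U = {S : SpecT P | p ∈ S.1}}

/-- The clique-spectrum: unbounded maximal cliques. -/
def CliqueSpec : Set (Set P) :=
  {X | IsUnbounded X ∧ IsClique X ∧ ∀ Y : Set P, IsClique Y → X ⊆ Y → Y = X}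

def CliqueSpecT : Type _ := {X : Set P // X ∈ CliqueSpec P}

instance : TopologicalSpace (CliqueSpecT P) :=
  TopologicalSpace.generateFrom {U | ∃ p : P, U = {X : CliqueSpecT P | p ∉ X.1}}

variable {P}

/-- The basic open set `p_S`. -/
def pSOpen (p : P) : Set (SpecT P) := {S | p ∈ S.1}

/-- The closed set `p̄_S = {S : S ⊆ p^∧}`. -/
def pSBar (p : P) : Set (SpecT P) := {S | S.1 ⊆ wedgeSet p}

/-- Prime ω-poset: every basic open set is nonempty. -/
def IsPrimePoset (P : Type*) [PartialOrder P] : Prop := ∀ p : P, (pSOpen p).Nonempty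

end OmegaPoset

end OP

namespace OP

section Refiners

variable {P Q : Type*} [PartialOrder P] [PartialOrder Q]

/-- A refiner: every cap of `Q` is refined through the relation by some cap of `P`. -/
def IsRefinerRel (R : Q → P → Prop) : Prop :=
  ∀ C : Set Q, IsCap C → ∃ B : Set P, IsCap B ∧ ∀ b ∈ B, ∃ c ∈ C, R c b

/-- `∧`-preserving: `⊐ ∘ ∧ ∘ ⊏ ⊆ ∧`. -/
def WedgePres (R : Q → P → Prop) : Prop :=
  ∀ q p p' q', R q p → wedge p p' → R q' p' → wedge q q'

/-- `⌅`-preserving: `⊐ ∘ ⌅ ∘ ⊏ ⊆ ⌅`. -/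
def BarwedgePres (R : Q → P → Prop) : Prop :=
  ∀ q p p' q', R q p → barwedge p p' → R q' p' → barwedge q q'

/-- The star `⊐*` of a relation: `q ⊐* p` iff some cap `C` has `C ∩ p^∧ ⊏ q`. -/
def relStar (R : Q → P → Prop) (q : Q) (p : P) : Prop :=
  ∃ C : Set P, IsCap C ∧ ∀ c ∈ C, wedge p c → R q c

/-- Composition `▷ ∘ ⊐` with the star-above relation on `Q`. -/
def starAboveComp (R : Q → P → Prop) : Q → P → Prop :=
  fun q p => ∃ q', starBelow q' q ∧ R q' p

/-- A strong refiner: a `∧`-preserving refiner with `⊐ = ▷ * ⊐`. -/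
def IsStrongRefiner (R : Q → P → Prop) : Prop :=
  IsRefinerRel R ∧ WedgePres R ∧ ∀ q p, R q p ↔ relStar (starAboveComp R) q p

/-- `φ` is the continuous map associated to `R`, i.e. `φ(S) = S^{⊏ ⊲}`. -/
def specMapOf (R : Q → P → Prop) (φ : SpecT P → SpecT Q) : Prop :=
  ∀ S : SpecT P, (φ S).1 = {r : Q | ∃ p ∈ S.1, ∃ q, R q p ∧ starBelow q r}

/-- The relation `⊒_φ`: `q ⊒_φ p` iff `q̄_S ⊇ φ[p̄_S]`. -/
def relBarPhi (φ : SpecT P → SpecT Q) (q : Q) (p : P) : Prop :=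
  ∀ S : SpecT P, S ∈ pSBar p → φ S ∈ pSBar q

/-- The relation `⊐_φ`: `q ⊐_φ p` iff `q_S ⊇ φ[p̄_S]`. -/
def relPhi (φ : SpecT P → SpecT Q) (q : Q) (p : P) : Prop :=
  ∀ S : SpecT P, S ∈ pSBar p → φ S ∈ pSOpen q

/-- An arrow: a finite relation with `← ∘ ⌅` co-surjective. -/
def IsArrow (A : Q → P → Prop) : Prop :=
  {x : Q × P | A x.1 x.2}.Finite ∧ ∀ p : P, ∃ q p', A q p' ∧ barwedge p' p

/-- `A ≤ B` for relations: `A ⊆ ≤ ∘ B ∘ ≥`. -/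
def arrowLe (A B : Q → P → Prop) : Prop :=
  ∀ q p, A q p → ∃ q' p', q ≤ q' ∧ p ≤ p' ∧ B q' p'

/-- The relation `⟨←` of an arrow: `q ⟨← p` iff `p^{⌅→} ⊲ q`. -/
def angleRel (A : Q → P → Prop) (q : Q) (p : P) : Prop :=
  ∀ q', (∃ p', barwedge p p' ∧ A q' p') → starBelow q' q

/-- The relation `⋂ₙ (←ₙ)̄_S` on spectra determined by a sequence of arrows. -/
def seqGraph (A : ℕ → Q → P → Prop) (T : SpecT Q) (S : SpecT P) : Prop :=
  ∀ n, ∃ q p, A n q p ∧ T.1 ⊆ wedgeSet q ∧ S.1 ⊆ wedgeSet p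

end Refiners

end OP

namespace OP

variable {P Q : Type*} [PartialOrder P] [PartialOrder Q]

/-- The interleaved sequence `←_{2n} = ⊐_n`, `←_{2n+1} = ⊴_n`. -/
def interleave (R : ℕ → Q → P → Prop) (T : ℕ → P → Q → Prop) (k : ℕ) (q : Q) (p : P) : Prop :=
  if k % 2 = 0 then R (k / 2) q p else T (k / 2) p q

end OP

namespace OP

section Order

variable {P : Type*} [PartialOrder P] {p q r : P}

lemma wedge_symm (h : wedge p q) : wedge q p :=
  let ⟨s, hp, hq⟩ := h; ⟨s, hq, hp⟩

lemma wedge_of_le (h : p ≤ q) : wedge p q := ⟨p, le_rfl, h⟩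

lemma wedge_mono_right (h : wedge p q) (hq : q ≤ r) : wedge p r :=
  let ⟨s, hp, hs⟩ := h; ⟨s, hp, hs.trans hq⟩

lemma wedge_mono_left (h : wedge p q) (hp : p ≤ r) : wedge r q :=
  wedge_symm (wedge_mono_right (wedge_symm h) hp)

lemma wedgeSet_mono (h : p ≤ q) : wedgeSet p ⊆ wedgeSet q := fun _ hr => wedge_mono_left hr h

lemma refines_trans {A B C : Set P} (hAB : refines A B) (hBC : refines B C) : refines A C :=
  fun a ha =>
    let ⟨b, hb, hab⟩ := hAB a ha
    let ⟨c, hc, hbc⟩ := hBC b hb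
    ⟨c, hc, hab.trans hbc⟩

lemma IsCap.of_refines {B C : Set P} (hB : IsCap B) (h : refines B C) : IsCap C :=
  let ⟨n, hn⟩ := hB; ⟨n, refines_trans hn h⟩

lemma level_isCap (n : ℕ) : IsCap (level P n) := ⟨n, fun a ha => ⟨a, ha, le_rfl⟩⟩

lemma starBelowOn_anti_left {C : Set P} (hs : starBelowOn C p q) (h : r ≤ p) :
    starBelowOn C r q :=
  fun c hc hw => hs c hc (wedge_mono_left hw h)

lemma starBelow_anti_left (hs : starBelow p q) (h : r ≤ p) : starBelow r q :=
  let ⟨n, hn⟩ := hs; ⟨n, starBelowOn_anti_left hn h⟩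

/-- The cap `{r} ∪ {e ∈ level P j | ¬ e ≤ r}` forces a selector wedging `q` to contain `r`. -/
lemma IsSelector.mem_of_starBelow {S : Set P} (hS : IsSelector S) (hq : S ⊆ wedgeSet q)
    (hqc : starBelow q r) : r ∈ S := by
  obtain ⟨j, hj⟩ := hqc
  have hcap : IsCap (insert r {e ∈ level P j | ¬ e ≤ r}) := by
    refine ⟨j, fun a ha => ?_⟩
    by_cases har : a ≤ r
    · exact ⟨r, Set.mem_insert r _, har⟩
    · exact ⟨a, Or.inr ⟨ha, har⟩, le_rfl⟩
  obtain ⟨x, hxS, rfl | ⟨hxl, hxr⟩⟩ := hS _ hcap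
  · exact hxS
  · exact absurd (hj x hxl (hq hxS)) hxr

end Order

section OmegaPoset

variable {P : Type*} [PartialOrder P] {p q : P} {m n : ℕ}

lemma cone_mono : Monotone (cone P) := by
  refine monotone_nat_of_le_succ fun n => ?_
  induction n with
  | zero => exact fun p hp q hq => absurd hq (hp q)
  | succ n ih => exact fun p hp q hq => ih (hp q hq)

noncomputable def depth (p : P) : ℕ := sInf {n | p ∈ cone P n}

variable (hω : IsOmegaPoset P)
include hω

lemma depth_le_iff : depth p ≤ n ↔ p ∈ cone P n :=
  ⟨fun h => cone_mono h (Nat.sInf_mem (hω.2 p)), fun h => Nat.sInf_le h⟩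

lemma depth_lt_of_lt (h : q < p) : depth p < depth q := by
  have hq : q ∈ cone P (depth q) := (depth_le_iff hω).1 le_rfl
  cases hd : depth q with
  | zero => rw [hd] at hq; exact absurd h (hq p)
  | succ d => rw [hd] at hq; exact Nat.lt_succ_of_le ((depth_le_iff hω).2 (hq p h))

lemma exists_gt_depth_eq (hp : depth p = n + 1) : ∃ r, p < r ∧ depth r = n := by
  by_contra! hne
  have hlt : ∀ r, p < r → depth r < n := fun r hr =>
    lt_of_le_of_ne (Nat.lt_succ_iff.1 (hp ▸ depth_lt_of_lt hω hr :)) (hne r hr)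
  have hpn : p ∈ cone P n := by
    cases n with
    | zero => exact fun r hr => absurd (hlt r hr) (Nat.not_lt_zero _)
    | succ n => exact fun r hr => (depth_le_iff hω).1 (Nat.lt_succ_iff.1 (hlt r hr))
  have := (depth_le_iff hω).2 hpn
  omega

lemma exists_ge_depth_eq (h : n ≤ depth p) : ∃ b, p ≤ b ∧ depth b = n := by
  obtain ⟨k, hk⟩ := Nat.exists_eq_add_of_le h
  induction k generalizing p with
  | zero => exact ⟨p, le_rfl, hk⟩
  | succ k ih =>
    obtain ⟨r, hpr, hr⟩ := exists_gt_depth_eq hω (n := n + k) hk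
    obtain ⟨b, hrb, hb⟩ := ih (hr ▸ Nat.le_add_right n k) hr
    exact ⟨b, hpr.le.trans hrb, hb⟩

lemma exists_mem_level_ge (h : n ≤ depth p) : ∃ b ∈ level P n, p ≤ b := by
  obtain ⟨b, hpb, hb⟩ := exists_ge_depth_eq hω h
  refine ⟨b, ⟨(depth_le_iff hω).1 hb.le, fun c hcb hc => ?_⟩, hpb⟩
  have := depth_lt_of_lt hω hcb
  have := (depth_le_iff hω).2 hc
  omega

/-- An element of `cone P n` below `p` of largest depth is minimal in `cone P n`. -/
lemma exists_mem_level_le (hp : p ∈ cone P n) : ∃ a ∈ level P n, a ≤ p := by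
  obtain ⟨a, ⟨ha, hap⟩, hmin⟩ := (measure fun a => n - depth a).wf.has_min
    {a | a ∈ cone P n ∧ a ≤ p} ⟨p, hp, le_rfl⟩
  refine ⟨a, ⟨ha, fun c hca hc => hmin c ⟨hc, hca.le.trans hap⟩ ?_⟩, hap⟩
  have := depth_lt_of_lt hω hca
  have := (depth_le_iff hω).2 hc
  show n - depth c < n - depth a
  omega

lemma level_refines_level (h : n ≤ m) : refines (level P m) (level P n) := by
  intro a ha
  rcases le_or_gt (depth a) n with hd | hd
  · exact ⟨a, ⟨(depth_le_iff hω).1 hd, fun c hc hcn => ha.2 c hc (cone_mono h hcn)⟩, le_rfl⟩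
  · exact exists_mem_level_ge hω hd.le

lemma exists_mem_level_wedge (p : P) (n : ℕ) : ∃ b ∈ level P n, wedge p b := by
  rcases le_or_gt (depth p) n with hd | hd
  · obtain ⟨a, ha, hap⟩ := exists_mem_level_le hω ((depth_le_iff hω).1 hd)
    exact ⟨a, ha, wedge_symm (wedge_of_le hap)⟩
  · obtain ⟨b, hb, hpb⟩ := exists_mem_level_ge hω hd.le
    exact ⟨b, hb, wedge_of_le hpb⟩

lemma IsCap.exists_wedge {C : Set P} (hC : IsCap C) (p : P) : ∃ c ∈ C, wedge p c := by
  obtain ⟨n, hn⟩ := hC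
  obtain ⟨b, hb, hpb⟩ := exists_mem_level_wedge hω p n
  obtain ⟨c, hc, hbc⟩ := hn b hb
  exact ⟨c, hc, wedge_mono_right hpb hbc⟩

lemma IsCap.exists_forall_refines_level {C : Set P} (hC : IsCap C) :
    ∃ n₀, ∀ n, n₀ ≤ n → refines (level P n) C :=
  let ⟨n₀, hn₀⟩ := hC; ⟨n₀, fun _ hn => refines_trans (level_refines_level hω hn) hn₀⟩

lemma IsCap.exists_finite_subset {C : Set P} (hC : IsCap C) :
    ∃ C' ⊆ C, C'.Finite ∧ IsCap C' := by
  obtain ⟨n, hn⟩ := hC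
  choose f hfC hf using hn
  refine ⟨{c | ∃ a ha, f a ha = c}, ?_, (hω.1 n).dependent_image f, n, fun a ha => ?_⟩
  · rintro c ⟨a, ha, rfl⟩
    exact hfC a ha
  · exact ⟨f a ha, ⟨a, ha, rfl⟩, hf a ha⟩

lemma barwedge_of_wedge (h : wedge p q) : barwedge p q := by
  intro C hC
  obtain ⟨s, hsp, hsq⟩ := h
  obtain ⟨c, hc, t, hts, htc⟩ := hC.exists_wedge hω s
  exact ⟨c, hc, ⟨t, hts.trans hsp, htc⟩, ⟨t, htc, hts.trans hsq⟩⟩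

lemma starBelowOn_level_mono {j J : ℕ} (h : j ≤ J) (hs : starBelowOn (level P j) p q) :
    starBelowOn (level P J) p q := by
  intro d hd hw
  obtain ⟨e, he, hde⟩ := level_refines_level hω h d hd
  exact hde.trans (hs e he (wedge_mono_right hw hde))

end OmegaPoset

section Regular

variable {P : Type*} [PartialOrder P] (hω : IsOmegaPoset P) (hreg : IsRegular P)
include hω hreg

/-- Since levels are finite, the depths of the witnesses of `⊲` can be bounded uniformly. -/
lemma exists_level_starBelowOn {E : Set P} (hE : IsCap E) :
    ∃ n J, ∀ p ∈ level P n, ∃ e ∈ E, starBelowOn (level P J) p e := by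
  obtain ⟨m, hm⟩ := hE
  obtain ⟨n, -, hn⟩ := hreg m
  have hwit : ∀ p ∈ level P n, ∃ j, ∃ e ∈ E, starBelowOn (level P j) p e := fun p hp => by
    obtain ⟨q, hq, j, hpq⟩ := hn p hp
    obtain ⟨e, he, hqe⟩ := hm q hq
    exact ⟨j, e, he, fun c hc hpc => (hpq c hc hpc).trans hqe⟩
  choose! j hj using hwit
  obtain ⟨J, hJ⟩ := ((hω.1 n).image j).bddAbove
  refine ⟨n, J, fun p hp => ?_⟩
  obtain ⟨e, he, hpe⟩ := hj p hp
  exact ⟨e, he, starBelowOn_level_mono hω (hJ ⟨p, hp, rfl⟩) hpe⟩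

/-- Regularity applied twice: a level star-below a level that is itself star-below `E`. -/
lemma exists_level_starBelow_of_wedge {E : Set P} (hE : IsCap E) :
    ∃ J, ∀ x ∈ level P J, ∃ c ∈ E, ∀ y ∈ level P J, wedge y x → starBelow y c := by
  obtain ⟨m, J₀, hm⟩ := exists_level_starBelowOn hω hreg hE
  obtain ⟨n, J₁, hn⟩ := exists_level_starBelowOn hω hreg (level_isCap m)
  refine ⟨max n J₁, fun x hx => ?_⟩
  obtain ⟨v, hv, hxv⟩ := level_refines_level hω (le_max_left _ _) x hx
  obtain ⟨z, hz, hvz⟩ := hn v hv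
  obtain ⟨c, hc, hzc⟩ := hm z hz
  refine ⟨c, hc, fun y hy hyx => ⟨J₀, starBelowOn_anti_left hzc ?_⟩⟩
  exact starBelowOn_level_mono hω (le_max_right _ _) hvz y hy
    (wedge_symm (wedge_mono_right hyx hxv))

lemma exists_level_wedge_of_barwedge {A : Set P} (hA : IsCap A) :
    ∃ s, ∀ b ∈ level P s, ∃ z ∈ A, ∀ p, barwedge b p → wedge p z := by
  obtain ⟨s, J, hs⟩ := exists_level_starBelowOn hω hreg hA
  refine ⟨s, fun b hb => ?_⟩
  obtain ⟨z, hz, hbz⟩ := hs b hb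
  refine ⟨z, hz, fun p hbp => ?_⟩
  obtain ⟨e, he, hbe, u, hue, hup⟩ := hbp _ (level_isCap J)
  exact ⟨u, hup, hue.trans (hbz e he hbe)⟩

end Regular

section Spectrum

variable {P : Type*} [PartialOrder P] {S : Set P} {p : P}

lemma Spec.exists_isCap_eq (hS : S ∈ Spec P) (hp : p ∈ S) :
    ∃ C, IsCap C ∧ ∀ x ∈ S, x ∈ C → x = p := by
  by_contra! h
  have hsel : IsSelector (S \ {p}) := fun C hC =>
    let ⟨x, hxS, hxC, hxp⟩ := h C hC
    ⟨x, ⟨hxS, hxp⟩, hxC⟩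
  have := hS.2 _ Set.sdiff_subset hsel
  exact (this.symm ▸ hp : p ∈ S \ {p}).2 rfl

variable (hω : IsOmegaPoset P)
include hω

/-- The intersection of a chain of selectors meets every cap: it suffices to meet a finite
subcap, and on a finite set the chain has a least trace. -/
lemma isSelector_sInter {c : Set (Set P)} (hsel : ∀ T ∈ c, IsSelector T)
    (hc : IsChain (· ⊆ ·) c) (hne : c.Nonempty) : IsSelector (⋂₀ c) := by
  intro C hC
  obtain ⟨C', hC'C, hC'fin, hC'⟩ := hC.exists_finite_subset hω
  obtain ⟨T₀, hT₀, hmin⟩ := Set.Finite.exists_minimalFor' (· ∩ C') c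
    (hC'fin.finite_subsets.subset (by rintro _ ⟨T, -, rfl⟩; exact Set.inter_subset_right)) hne
  obtain ⟨x, hxT₀, hxC'⟩ := hsel T₀ hT₀ C' hC'
  refine ⟨x, fun T hT => ?_, hC'C hxC'⟩
  rcases hc.total hT hT₀ with hTT₀ | hT₀T
  · exact (hmin hT (Set.inter_subset_inter_left C' hTT₀) ⟨hxT₀, hxC'⟩).1
  · exact hT₀T hxT₀

lemma exists_mem_spec_subset (hS : IsSelector S) : ∃ M ∈ Spec P, M ⊆ S := by
  obtain ⟨M, hMS, hM⟩ := zorn_superset_nonempty {T | T ⊆ S ∧ IsSelector T}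
    (fun c hcS hc hne => ⟨⋂₀ c, ⟨(Set.sInter_subset_of_mem hne.some_mem).trans (hcS hne.some_mem).1,
      isSelector_sInter hω (fun T hT => (hcS hT).2) hc hne⟩, fun _ => Set.sInter_subset_of_mem⟩)
    S ⟨subset_rfl, hS⟩
  exact ⟨M, ⟨hM.1.2, fun T hTM hT => hTM.antisymm (hM.2 ⟨hTM.trans hM.1.1, hT⟩ hTM)⟩, hMS⟩

/-- For `p ∈ S`, the elements of `S` wedging `p` still form a selector: a cap `C` is replaced by
the cap `(E \ {p}) ∪ {c ∈ C | wedge p c}`, where `E` is a cap meeting `S` only in `p`. -/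
lemma Spec.subset_wedgeSet (hS : S ∈ Spec P) (hp : p ∈ S) : S ⊆ wedgeSet p := by
  obtain ⟨E, hE, hEp⟩ := Spec.exists_isCap_eq hS hp
  have hsel : IsSelector {x ∈ S | wedge p x} := by
    intro C hC
    obtain ⟨n₁, hn₁⟩ := hE.exists_forall_refines_level hω
    obtain ⟨n₂, hn₂⟩ := hC.exists_forall_refines_level hω
    have hcap : IsCap ((E \ {p}) ∪ {c ∈ C | wedge p c}) := by
      refine ⟨max n₁ n₂, fun a ha => ?_⟩
      obtain ⟨e, he, hae⟩ := hn₁ _ (le_max_left _ _) a ha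
      by_cases hep : e = p
      · obtain ⟨c, hc, hac⟩ := hn₂ _ (le_max_right _ _) a ha
        exact ⟨c, Or.inr ⟨hc, a, hep ▸ hae, hac⟩, hac⟩
      · exact ⟨e, Or.inl ⟨he, hep⟩, hae⟩
    obtain ⟨x, hxS, ⟨hxE, hxp⟩ | ⟨hxC, hpx⟩⟩ := hS.1 _ hcap
    · exact absurd (hEp x hxS hxE) hxp
    · exact ⟨x, ⟨hxS, hpx⟩, hxC⟩
  rw [← hS.2 _ (Set.sep_subset _ _) hsel]
  exact fun x hx => hx.2

lemma Spec.barwedge (hS : S ∈ Spec P) {b : P} (hb : b ∈ S) (hp : S ⊆ wedgeSet p) :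
    barwedge b p := by
  rintro F ⟨n, hn⟩
  obtain ⟨s, hsS, hs⟩ := hS.1 _ (level_isCap n)
  obtain ⟨f, hf, hsf⟩ := hn s hs
  exact ⟨f, hf, wedge_mono_right (Spec.subset_wedgeSet hω hS hb hsS) hsf,
    wedge_symm (wedge_mono_right (hp hsS) hsf)⟩

lemma exists_spec_subset_wedgeSet {a : ℕ → P} (ha : Antitone a)
    (hsel : ∀ B, IsCap B → ∃ n, ∃ b ∈ B, a n ≤ b) : ∃ S : SpecT P, ∀ n, S.1 ⊆ wedgeSet (a n) := by
  obtain ⟨M, hM, hMU⟩ := exists_mem_spec_subset hω (S := {p | ∃ n, a n ≤ p}) fun B hB =>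
    let ⟨n, b, hb, hab⟩ := hsel B hB
    ⟨b, ⟨n, hab⟩, hb⟩
  refine ⟨⟨M, hM⟩, fun n t ht => ?_⟩
  obtain ⟨m, hmt⟩ := hMU ht
  exact ⟨a (max n m), ha (le_max_left n m), (ha (le_max_right n m)).trans hmt⟩

end Spectrum

lemma isOpen_pSOpen {P : Type*} [PartialOrder P] (p : P) : IsOpen (pSOpen p) :=
  TopologicalSpace.GenerateOpen.basic _ ⟨p, rfl⟩

section Konig

variable {α : Type*} {V : ℕ → Set α} {E : ℕ → α → α → Prop}

lemma exists_path_of_forall_exists_pred (hne : ∀ n, (V n).Nonempty)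
    (hpred : ∀ n, ∀ b ∈ V (n + 1), ∃ a ∈ V n, E n a b) (N : ℕ) :
    ∀ b ∈ V N, ∃ f : ℕ → α, (∀ n, f n ∈ V n) ∧ (∀ n < N, E n (f n) (f (n + 1))) ∧ f N = b := by
  induction N with
  | zero =>
    intro b hb
    refine ⟨Function.update (fun n => (hne n).some) 0 b, fun n => ?_, nofun, by simp⟩
    rcases eq_or_ne n 0 with rfl | hn
    · simpa using hb
    · simpa [hn] using (hne n).some_mem
  | succ N ih =>
    intro b hb
    obtain ⟨a, ha, hab⟩ := hpred N b hb
    obtain ⟨f, hfV, hfE, hfN⟩ := ih a ha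
    have hf : ∀ n ≤ N, Function.update f (N + 1) b n = f n := fun n hn =>
      Function.update_of_ne (by omega) _ _
    refine ⟨Function.update f (N + 1) b, fun n => ?_, fun n hn => ?_, by simp⟩
    · rcases eq_or_ne n (N + 1) with rfl | hn
      · simpa using hb
      · simpa [hn] using hfV n
    · rcases Nat.lt_succ_iff_lt_or_eq.1 hn with hn | rfl
      · rw [hf n hn.le, hf (n + 1) hn]
        exact hfE n hn
      · rw [hf n le_rfl, hfN]
        simpa using hab

/-- **Kőnig's lemma**, by compactness of `∏ n, V n`. -/
lemma exists_seq_of_forall_exists_pred (hfin : ∀ n, (V n).Finite) (hne : ∀ n, (V n).Nonempty)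
    (hpred : ∀ n, ∀ b ∈ V (n + 1), ∃ a ∈ V n, E n a b) :
    ∃ f : ℕ → α, (∀ n, f n ∈ V n) ∧ ∀ n, E n (f n) (f (n + 1)) := by
  let _ : ∀ n, TopologicalSpace (V n) := fun _ => ⊥
  have : ∀ n, DiscreteTopology (V n) := fun _ => ⟨rfl⟩
  have : ∀ n, Finite (V n) := fun n => (hfin n).to_subtype
  let K : ℕ → Set (∀ n, V n) := fun N => ⋂ n < N, {f | E n (f n) (f (n + 1))}
  have hclosed : ∀ N, IsClosed (K N) := fun N => isClosed_biInter fun n _ =>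
    (isClosed_discrete {x : V n × V (n + 1) | E n x.1 x.2}).preimage
      (f := fun f : ∀ n, V n => (f n, f (n + 1))) (by fun_prop)
  have hK : (⋂ N, K N).Nonempty := by
    refine IsCompact.nonempty_iInter_of_sequence_nonempty_isCompact_isClosed K
      (fun N => Set.biInter_subset_biInter_left fun n hn => Nat.lt_succ_of_lt hn) (fun N => ?_)
      (isCompact_univ.of_isClosed_subset (hclosed 0) (Set.subset_univ _)) hclosed
    obtain ⟨b, hb⟩ := hne N
    obtain ⟨f, hfV, hfE, -⟩ := exists_path_of_forall_exists_pred hne hpred N b hb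
    exact ⟨fun n => ⟨f n, hfV n⟩, Set.mem_iInter₂.2 fun n hn => hfE n hn⟩
  obtain ⟨f, hf⟩ := hK
  exact ⟨fun n => f n, fun n => (f n).2,
    fun n => Set.mem_iInter₂.1 (Set.mem_iInter.1 hf (n + 1)) n (Nat.lt_succ_self n)⟩

end Konig

lemma isArrow_of_isCap {P Q : Type*} [PartialOrder P] [PartialOrder Q] (hω : IsOmegaPoset P)
    {A : Q → P → Prop} {D : Set Q} {C : Set P} (hD : D.Finite) (hC : C.Finite)
    (hA : ∀ q p, A q p → q ∈ D ∧ p ∈ C) (hcap : IsCap {p | ∃ q, A q p}) : IsArrow A := by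
  refine ⟨(hD.prod hC).subset fun x hx => hA x.1 x.2 hx, fun p => ?_⟩
  obtain ⟨p', ⟨q, hqp'⟩, hpp'⟩ := hcap.exists_wedge hω p
  exact ⟨q, p', hqp', barwedge_of_wedge hω (wedge_symm hpp')⟩

section Interleave

variable {P Q : Type*} {R : ℕ → Q → P → Prop} {T : ℕ → P → Q → Prop}

lemma interleave_two_mul (n : ℕ) : interleave R T (2 * n) = R n := by
  funext q p
  simp [interleave]

lemma interleave_two_mul_add_one (n : ℕ) :
    interleave R T (2 * n + 1) = fun q p => T n p q := by
  funext q p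
  simp [interleave, Nat.add_mod, Nat.add_div]

lemma interleave_swap :
    interleave T (fun n => R (n + 1)) = fun k p q => interleave R T (k + 1) q p := by
  funext k
  obtain ⟨n, rfl | rfl⟩ := Nat.even_or_odd' k
  · rw [interleave_two_mul, interleave_two_mul_add_one]
  · rw [interleave_two_mul_add_one, show 2 * n + 1 + 1 = 2 * (n + 1) by ring, interleave_two_mul]

end Interleave

section SeqGraph

variable {P Q : Type*} [PartialOrder P] [PartialOrder Q] {A : ℕ → Q → P → Prop}
  {x : SpecT P} {y : SpecT Q}

lemma seqGraph_swap : seqGraph (fun k p q => A k q p) x y ↔ seqGraph A y x :=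
  forall_congr' fun _ => ⟨fun ⟨p, q, h⟩ => ⟨q, p, h.1, h.2.2, h.2.1⟩,
    fun ⟨q, p, h⟩ => ⟨p, q, h.1, h.2.2, h.2.1⟩⟩

lemma seqGraph_succ_iff (hA : arrowLe (A 1) (A 0)) :
    seqGraph (fun k => A (k + 1)) y x ↔ seqGraph A y x := by
  refine ⟨fun h k => ?_, fun h k => h (k + 1)⟩
  cases k with
  | zero =>
    obtain ⟨q, p, hqp, hy, hx⟩ := h 0
    obtain ⟨q', p', hqq', hpp', hqp'⟩ := hA q p hqp
    exact ⟨q', p', hqp', hy.trans (wedgeSet_mono hqq'), hx.trans (wedgeSet_mono hpp')⟩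
  | succ k => exact h k

end SeqGraph

variable {P Q : Type*} [PartialOrder P] [PartialOrder Q]

/-- `forth n` is the relation `⊐ₙ ⊆ Dₙ × Cₙ` and `back n` is `⊵ₙ ⊆ Cₙ × Dₙ₊₁`. -/
structure IsBackForth (C : ℕ → Set P) (D : ℕ → Set Q) (forth : ℕ → Q → P → Prop)
    (back : ℕ → P → Q → Prop) : Prop where
  isOmegaPoset_left : IsOmegaPoset P
  isRegular_left : IsRegular P
  isOmegaPoset_right : IsOmegaPoset Q
  isRegular_right : IsRegular Q
  isCap_left : ∀ n, IsCap (C n)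
  finite_left : ∀ n, (C n).Finite
  isCap_right : ∀ n, IsCap (D n)
  finite_right : ∀ n, (D n).Finite
  coinitial_left : ∀ B : Set P, IsCap B → ∃ n, refines (C n) B
  coinitial_right : ∀ B : Set Q, IsCap B → ∃ n, refines (D n) B
  forth_mem : ∀ n q p, forth n q p → q ∈ D n ∧ p ∈ C n
  back_mem : ∀ n p q, back n p q → p ∈ C n ∧ q ∈ D (n + 1)
  forth_wedgePres : ∀ n, WedgePres (forth n)
  back_wedgePres : ∀ n, WedgePres (back n)
  forth_surj : ∀ n, ∀ p ∈ C n, ∃ q, forth n q p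
  back_surj : ∀ n, ∀ q ∈ D (n + 1), ∃ p, back n p q
  le_of_forth_back : ∀ n q p q', forth n q p → back n p q' → q' ≤ q
  le_of_back_forth : ∀ n p q p', back n p q → forth (n + 1) q p' → p' ≤ p

namespace IsBackForth

variable {C : ℕ → Set P} {D : ℕ → Set Q} {R : ℕ → Q → P → Prop} {T : ℕ → P → Q → Prop}
  (h : IsBackForth C D R T)
include h

lemma exists_forth_ge (n : ℕ) : ∀ q' ∈ D (n + 1), ∃ q p, R n q p ∧ q' ≤ q := fun q' hq' => by
  obtain ⟨p, hp⟩ := h.back_surj n q' hq'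
  obtain ⟨q, hq⟩ := h.forth_surj n p (h.back_mem n p q' hp).1
  exact ⟨q, p, hq, h.le_of_forth_back n q p q' hq hp⟩

/-- The same hypotheses, read from `Q` to `P` after dropping `D₀` and `⊐₀`. -/
lemma symm : IsBackForth (fun n => D (n + 1)) C T (fun n => R (n + 1)) where
  isOmegaPoset_left := h.isOmegaPoset_right
  isRegular_left := h.isRegular_right
  isOmegaPoset_right := h.isOmegaPoset_left
  isRegular_right := h.isRegular_left
  isCap_left n := h.isCap_right (n + 1)
  finite_left n := h.finite_right (n + 1)
  isCap_right := h.isCap_left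
  finite_right := h.finite_left
  coinitial_left B hB := by
    obtain ⟨n, hn⟩ := h.coinitial_right B hB
    refine ⟨n, refines_trans (fun q' hq' => ?_) hn⟩
    obtain ⟨q, p, hqp, hq'q⟩ := h.exists_forth_ge n q' hq'
    exact ⟨q, (h.forth_mem n q p hqp).1, hq'q⟩
  coinitial_right := h.coinitial_left
  forth_mem := h.back_mem
  back_mem n q p hqp := h.forth_mem (n + 1) q p hqp
  forth_wedgePres := h.back_wedgePres
  back_wedgePres n := h.forth_wedgePres (n + 1)
  forth_surj := h.back_surj
  back_surj n := h.forth_surj (n + 1)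
  le_of_forth_back := h.le_of_back_forth
  le_of_back_forth n := h.le_of_forth_back (n + 1)

lemma isArrow_forth (n : ℕ) : IsArrow (R n) ∧ IsArrow (fun p q => R n q p) := by
  refine ⟨isArrow_of_isCap h.isOmegaPoset_left (h.finite_right n) (h.finite_left n)
    (h.forth_mem n) ((h.isCap_left n).of_refines fun p hp => ?_),
    isArrow_of_isCap h.isOmegaPoset_right (h.finite_left n) (h.finite_right n)
    (fun p q hqp => (h.forth_mem n q p hqp).symm) ((h.isCap_right (n + 1)).of_refines ?_)⟩
  · obtain ⟨q, hq⟩ := h.forth_surj n p hp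
    exact ⟨p, ⟨q, hq⟩, le_rfl⟩
  · intro q' hq'
    obtain ⟨q, p, hqp, hq'q⟩ := h.exists_forth_ge n q' hq'
    exact ⟨q, ⟨p, hqp⟩, hq'q⟩

lemma isArrow_interleave (k : ℕ) :
    IsArrow (interleave R T k) ∧ IsArrow (fun p q => interleave R T k q p) := by
  obtain ⟨n, rfl | rfl⟩ := Nat.even_or_odd' k
  · rw [interleave_two_mul]
    exact h.isArrow_forth n
  · rw [interleave_two_mul_add_one]
    exact (h.symm.isArrow_forth n).symm

lemma arrowLe_interleave (k : ℕ) : arrowLe (interleave R T (k + 1)) (interleave R T k) := by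
  obtain ⟨n, rfl | rfl⟩ := Nat.even_or_odd' k
  · rw [interleave_two_mul_add_one, interleave_two_mul]
    intro q p hpq
    obtain ⟨q', hq'⟩ := h.forth_surj n p (h.back_mem n p q hpq).1
    exact ⟨q', p, h.le_of_forth_back n q' p q hq' hpq, le_rfl, hq'⟩
  · rw [show 2 * n + 1 + 1 = 2 * (n + 1) by ring, interleave_two_mul, interleave_two_mul_add_one]
    intro q p hqp
    obtain ⟨p', hp'⟩ := h.back_surj n q (h.forth_mem (n + 1) q p hqp).1
    exact ⟨q, p', le_rfl, h.le_of_back_forth n p' q p hp' hqp, hp'⟩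

lemma seqGraph_symm {x : SpecT P} {y : SpecT Q} :
    seqGraph (interleave T fun n => R (n + 1)) x y ↔ seqGraph (interleave R T) y x := by
  rw [interleave_swap, seqGraph_swap, seqGraph_succ_iff (h.arrowLe_interleave 0)]


/-- Regularity of `P` concentrates the `⌅`-neighbourhood of `b` near one element of `C_N`,
regularity of `Q` absorbs its image star-below one element of `E`, and `∧`-preservation of `⊐_N`
links the two. -/
lemma exists_angleRel {E : Set Q} (hE : IsCap E) :
    ∃ N s, ∀ b ∈ level P s, ∃ c ∈ E, angleRel (R N) c b := by
  obtain ⟨J, hJ⟩ := exists_level_starBelow_of_wedge h.isOmegaPoset_right h.isRegular_right hE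
  obtain ⟨N, hN⟩ := h.coinitial_right _ (level_isCap J)
  obtain ⟨s, hs⟩ :=
    exists_level_wedge_of_barwedge h.isOmegaPoset_left h.isRegular_left (h.isCap_left N)
  refine ⟨N, s, fun b hb => ?_⟩
  obtain ⟨z, hz, hbz⟩ := hs b hb
  obtain ⟨qz, hqz⟩ := h.forth_surj N z hz
  obtain ⟨x, hx, hqx⟩ := hN qz (h.forth_mem N qz z hqz).1
  obtain ⟨c, hc, hxc⟩ := hJ x hx
  refine ⟨c, hc, fun q ⟨p, hbp, hqp⟩ => ?_⟩
  obtain ⟨x', hx', hqx'⟩ := hN q (h.forth_mem N q p hqp).1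
  have hqqz : wedge q qz := h.forth_wedgePres N q p z qz hqp (hbz p hbp) hqz
  exact starBelow_anti_left
    (hxc x' hx' (wedge_mono_right (wedge_mono_left hqqz hqx') hqx)) hqx'

lemma isRefinerRel_angleRel :
    IsRefinerRel fun (q : Q) (p : P) => ∃ k, angleRel (interleave R T k) q p := by
  intro E hE
  obtain ⟨N, s, hs⟩ := h.exists_angleRel hE
  refine ⟨level P s, level_isCap s, fun b hb => ?_⟩
  obtain ⟨c, hc, hcb⟩ := hs b hb
  exact ⟨c, hc, 2 * N, by rwa [interleave_two_mul]⟩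

lemma isRefinerRel_angleRel_swap :
    IsRefinerRel fun (p : P) (q : Q) => ∃ k, angleRel (fun p' q' => interleave R T k q' p') p q := by
  intro E hE
  obtain ⟨B, hB, hBE⟩ := h.symm.isRefinerRel_angleRel E hE
  refine ⟨B, hB, fun b hb => ?_⟩
  obtain ⟨c, hc, k, hk⟩ := hBE b hb
  exact ⟨c, hc, k + 1, by rwa [interleave_swap] at hk⟩

lemma exists_mem_of_seqGraph {E : Set Q} (hE : IsCap E) (x₀ : SpecT P) :
    ∃ b ∈ x₀.1, ∃ c ∈ E, ∀ (x : SpecT P) (y : SpecT Q),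
      b ∈ x.1 → seqGraph (interleave R T) y x → c ∈ y.1 := by
  obtain ⟨N, s, hs⟩ := h.exists_angleRel hE
  obtain ⟨b, hbx₀, hb⟩ := x₀.2.1 _ (level_isCap s)
  obtain ⟨c, hc, hcb⟩ := hs b hb
  refine ⟨b, hbx₀, c, hc, fun x y hbx hxy => ?_⟩
  obtain ⟨q, p, hqp, hy, hx⟩ := hxy (2 * N)
  rw [interleave_two_mul] at hqp
  exact y.2.1.mem_of_starBelow hy
    (hcb q ⟨p, Spec.barwedge h.isOmegaPoset_left x.2 hbx hx, hqp⟩)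

lemma eq_of_seqGraph {x : SpecT P} {y₁ y₂ : SpecT Q} (h₁ : seqGraph (interleave R T) y₁ x)
    (h₂ : seqGraph (interleave R T) y₂ x) : y₁ = y₂ := by
  have hsel : IsSelector (y₁.1 ∩ y₂.1) := fun E hE => by
    obtain ⟨b, hbx, c, hc, hcy⟩ := h.exists_mem_of_seqGraph hE x
    exact ⟨c, ⟨hcy x y₁ hbx h₁, hcy x y₂ hbx h₂⟩, hc⟩
  exact Subtype.ext ((y₁.2.2 _ Set.inter_subset_left hsel).symm.trans
    (y₂.2.2 _ Set.inter_subset_right hsel))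

lemma continuous_of_seqGraph {f : SpecT P → SpecT Q}
    (hf : ∀ x, seqGraph (interleave R T) (f x) x) : Continuous f := by
  refine continuous_generateFrom_iff.2 ?_
  rintro _ ⟨q₀, rfl⟩
  refine isOpen_iff_forall_mem_open.2 fun x₀ (hx₀ : q₀ ∈ (f x₀).1) => ?_
  obtain ⟨E, hE, hEq₀⟩ := Spec.exists_isCap_eq (f x₀).2 hx₀
  obtain ⟨b, hbx₀, c, hc, hcy⟩ := h.exists_mem_of_seqGraph hE x₀
  obtain rfl : c = q₀ := hEq₀ c (hcy x₀ (f x₀) hbx₀ (hf x₀)) hc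
  exact ⟨pSOpen b, fun x hbx => hcy x (f x) hbx (hf x), isOpen_pSOpen b, hbx₀⟩

/-- Kőnig's lemma yields a branch `(qₙ, pₙ)` through the finite relations `⊐ₙ`, with every `pₙ`
wedging `x` and `⊐ₙ ∘ ⊵ₙ` linking consecutive terms; the decreasing `qₙ` then determine `y`. -/
lemma exists_seqGraph (x : SpecT P) : ∃ y : SpecT Q, seqGraph (interleave R T) y x := by
  let V : ℕ → Set (Q × P) := fun n => {a | R n a.1 a.2 ∧ x.1 ⊆ wedgeSet a.2}
  have hfin : ∀ n, (V n).Finite := fun n =>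
    ((h.finite_right n).prod (h.finite_left n)).subset fun a ha => h.forth_mem n _ _ ha.1
  have hne : ∀ n, (V n).Nonempty := fun n => by
    obtain ⟨p, hpx, hpC⟩ := x.2.1 _ (h.isCap_left n)
    obtain ⟨q, hq⟩ := h.forth_surj n p hpC
    exact ⟨(q, p), hq, Spec.subset_wedgeSet h.isOmegaPoset_left x.2 hpx⟩
  have hpred : ∀ n, ∀ b ∈ V (n + 1), ∃ a ∈ V n, T n a.2 b.1 ∧ b.1 ≤ a.1 := fun n b hb => by
    obtain ⟨p, hp⟩ := h.back_surj n b.1 (h.forth_mem _ _ _ hb.1).1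
    obtain ⟨q, hq⟩ := h.forth_surj n p (h.back_mem n p b.1 hp).1
    exact ⟨(q, p), ⟨hq, hb.2.trans (wedgeSet_mono (h.le_of_back_forth n p b.1 b.2 hp hb.1))⟩,
      hp, h.le_of_forth_back n q p b.1 hq hp⟩
  obtain ⟨f, hfV, hfE⟩ := exists_seq_of_forall_exists_pred hfin hne hpred
  have hsel : ∀ B, IsCap B → ∃ n, ∃ b ∈ B, (f n).1 ≤ b := fun B hB => by
    obtain ⟨m, hm⟩ := h.coinitial_right B hB
    obtain ⟨b, hb, hfb⟩ := hm _ (h.forth_mem m _ _ (hfV m).1).1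
    exact ⟨m, b, hb, hfb⟩
  obtain ⟨y, hy⟩ := exists_spec_subset_wedgeSet h.isOmegaPoset_right
    (antitone_nat_of_succ_le fun n => (hfE n).2) hsel
  refine ⟨y, fun k => ?_⟩
  obtain ⟨n, rfl | rfl⟩ := Nat.even_or_odd' k
  · exact ⟨(f n).1, (f n).2, by rw [interleave_two_mul]; exact (hfV n).1, hy n, (hfV n).2⟩
  · exact ⟨(f (n + 1)).1, (f n).2, by rw [interleave_two_mul_add_one]; exact (hfE n).1,
      hy (n + 1), (hfV n).2⟩

lemma exists_homeomorph :
    ∃ e : SpecT P ≃ₜ SpecT Q, ∀ x, seqGraph (interleave R T) (e x) x := by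
  choose f hf using h.exists_seqGraph
  choose g hg using h.symm.exists_seqGraph
  refine ⟨{ toFun := f
            invFun := g
            left_inv := fun x => h.symm.eq_of_seqGraph (hg (f x)) (h.seqGraph_symm.2 (hf x))
            right_inv := fun y => h.eq_of_seqGraph (hf (g y)) (h.seqGraph_symm.1 (hg y))
            continuous_toFun := h.continuous_of_seqGraph hf
            continuous_invFun := h.symm.continuous_of_seqGraph hg }, hf⟩

end IsBackForth

end OP

open OP in
/-- Back-and-forth lemma: interleaving the given relations yields a bi-thin
arrow-sequence, and hence a homeomorphism `SP ≅ SQ`. -/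
theorem stmt12 {P Q : Type*} [PartialOrder P] [PartialOrder Q]
    (hP : IsOmegaPoset P) (hregP : IsRegular P) (hQ : IsOmegaPoset Q) (hregQ : IsRegular Q)
    (C : ℕ → Set P) (D : ℕ → Set Q)
    (hC : ∀ n, IsCap (C n) ∧ (C n).Finite) (hD : ∀ n, IsCap (D n) ∧ (D n).Finite)
    (hCco : ∀ B : Set P, IsCap B → ∃ n, refines (C n) B)
    (hDco : ∀ B : Set Q, IsCap B → ∃ n, refines (D n) B)
    (R : ℕ → Q → P → Prop) (T : ℕ → P → Q → Prop)
    (hRsub : ∀ n q p, R n q p → q ∈ D n ∧ p ∈ C n)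
    (hTsub : ∀ n p q, T n p q → p ∈ C n ∧ q ∈ D (n + 1))
    (hRw : ∀ n, WedgePres (R n)) (hTw : ∀ n, WedgePres (T n))
    (hRco : ∀ n, ∀ p ∈ C n, ∃ q, R n q p)
    (hTco : ∀ n, ∀ q ∈ D (n + 1), ∃ p, T n p q)
    (h1 : ∀ n q p q', R n q p → T n p q' → q' ≤ q)
    (h2 : ∀ n p q p', T n p q → R (n + 1) q p' → p' ≤ p) :
    (∀ k, IsArrow (interleave R T k) ∧ IsArrow (fun p q => interleave R T k q p)) ∧
    (∀ k, arrowLe (interleave R T (k + 1)) (interleave R T k)) ∧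
    IsRefinerRel (fun (q : Q) (p : P) => ∃ k, angleRel (interleave R T k) q p) ∧
    IsRefinerRel (fun (p : P) (q : Q) => ∃ k,
      angleRel (fun (p' : P) (q' : Q) => interleave R T k q' p') p q) ∧
    ∃ f : SpecT P ≃ₜ SpecT Q, ∀ (S : SpecT P) (k : ℕ), ∃ q p,
      interleave R T k q p ∧ (f S).1 ⊆ wedgeSet q ∧ S.1 ⊆ wedgeSet p := by
  have h : IsBackForth C D R T := ⟨hP, hregP, hQ, hregQ, fun n => (hC n).1, fun n => (hC n).2,
    fun n => (hD n).1, fun n => (hD n).2, hCco, hDco, hRsub, hTsub, hRw, hTw, hRco, hTco, h1, h2⟩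
  obtain ⟨e, he⟩ := h.exists_homeomorph
  exact ⟨h.isArrow_interleave, h.arrowLe_interleave, h.isRefinerRel_angleRel,
    h.isRefinerRel_angleRel_swap, e, he⟩
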